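/- arXiv:2004.01442 — 2 statements merged into one kernel-verified Lean document; each statement's English description precedes it below -/
import Mathlib

section
/- Let ρ > 0 and let T_1, ..., T_M be operators on ℝ^d each satisfying (1+ρ)‖T_i(x) − T_i(y)‖² ≤ ‖x − y‖² − ‖x − T_i(x) − y + T_i(y)‖² for all x, y ∈ ℝ^d. Let g_i(x) = x − T_i(x), let x⋆ be a fixed point of 𝒯 = (1/M) Σ_{i=1}^M T_i, and let 0 ≤ λ ≤ 1. Let x_1, ..., x_M ∈ ℝ^d, let x̂ = (1/M) Σ_{i=1}^M x_i, let V = (1/M) Σ_{i=1}^M ‖x_i − x̂‖², and let x̂⁺ = (1/M) Σ_{i=1}^M (x_i − λ g_i(x_i)). Then ‖x̂⁺ − x⋆‖² ≤ (1 − λρ/(1+ρ)) ‖x̂ − x⋆‖² + (5/2)λV − (1/2)λ(1/2 − λ)(1/M) Σ_{i=1}^M ‖g_i(x̂) − g_i(x⋆)‖². -/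
open Finset RealInnerProductSpace in
lemma jensen_avg {F : Type*} [NormedAddCommGroup F] [InnerProductSpace ℝ F]
    (M : ℕ) (hM : 0 < M) (f : Fin M → F) :
    ‖(M:ℝ)⁻¹ • ∑ i, f i‖ ^ 2 ≤ (M:ℝ)⁻¹ * ∑ i, ‖f i‖ ^ 2 := by
  have hMR : (0:ℝ) < M := by exact_mod_cast hM
  have h1 : ‖∑ i, f i‖ ≤ ∑ i, ‖f i‖ := norm_sum_le _ _
  have h2 : (∑ i : Fin M, ‖f i‖) ^ 2 ≤ (M:ℝ) * ∑ i, ‖f i‖ ^ 2 := by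
    simpa using sq_sum_le_card_mul_sum_sq (s := (univ : Finset (Fin M))) (f := fun i => ‖f i‖)
  have h3 : ‖(M:ℝ)⁻¹ • ∑ i, f i‖ = (M:ℝ)⁻¹ * ‖∑ i, f i‖ := by
    rw [norm_smul]; simp [abs_of_pos (inv_pos.2 hMR)]
  rw [h3, mul_pow]
  have h4 : ‖∑ i, f i‖ ^ 2 ≤ (∑ i : Fin M, ‖f i‖) ^ 2 :=
    pow_le_pow_left₀ (norm_nonneg _) h1 2
  calc ((M:ℝ)⁻¹)^2 * ‖∑ i, f i‖ ^ 2 ≤ ((M:ℝ)⁻¹)^2 * ((M:ℝ) * ∑ i, ‖f i‖ ^ 2) :=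
        mul_le_mul_of_nonneg_left (le_trans h4 h2) (by positivity)
    _ = (M:ℝ)⁻¹ * ∑ i, ‖f i‖ ^ 2 := by field_simp

lemma scalar1 (ρ l D V Q S ip g2 : ℝ) (hρ : 0 < ρ) (hl0 : 0 ≤ l) (hl : l ≤ 1/2)
    (hD : 0 ≤ D) (hV : 0 ≤ V) (hQ : 0 ≤ Q) (hS : 0 ≤ S)
    (hkey : ρ*(V + D) + (2+ρ)*Q - 2*(1+ρ)*(V + Q/4) ≤ 2*(1+ρ)*ip)
    (hG2 : g2 ≤ Q)
    (hSQ : S ≤ 2*Q + 2*V) :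
    D - 2*l*ip + l^2*g2 ≤ (1 - l*ρ/(1+ρ))*D + 5/2*l*V - 1/2*l*(1/2-l)*S := by
  have h1ρ : (0:ℝ) < 1 + ρ := by linarith
  have hcc : l*ρ/(1+ρ) * (1+ρ) = l*ρ := div_mul_cancel₀ _ (ne_of_gt h1ρ)
  have h2l : (0:ℝ) ≤ 1/2 - l := by linarith
  have hQVS : (0:ℝ) ≤ 2*Q + 2*V - S := by linarith
  have t1 := mul_le_mul_of_nonneg_left hkey hl0
  have t2 := mul_le_mul_of_nonneg_left hG2 (by positivity : (0:ℝ) ≤ l^2*(1+ρ))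
  have t3 : (0:ℝ) ≤ (l*(1/2-l)*(1+ρ)) * (2*Q + 2*V - S) :=
    mul_nonneg (mul_nonneg (mul_nonneg hl0 h2l) h1ρ.le) hQVS
  have t4 : (0:ℝ) ≤ l*Q := mul_nonneg hl0 hQ
  have t5 : (0:ℝ) ≤ l*ρ*V := mul_nonneg (mul_nonneg hl0 hρ.le) hV
  have t6 : (0:ℝ) ≤ l*l*V := mul_nonneg (mul_nonneg hl0 hl0) hV
  have t7 : (0:ℝ) ≤ l*l*ρ*V := mul_nonneg (mul_nonneg (mul_nonneg hl0 hl0) hρ.le) hV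
  nlinarith [t1, t2, t3, t4, t5, t6, t7, hcc, h1ρ, mul_pos h1ρ h1ρ]

set_option maxHeartbeats 1600000 in
open Finset RealInnerProductSpace in
/-- Lemma 3, one-step recursion for Algorithm 2 under the
cocoercivity-type contraction property. -/
theorem stmt_17 (d M : ℕ) (hM : 0 < M) (ρ : ℝ) (hρ : 0 < ρ)
    (T : Fin M → EuclideanSpace ℝ (Fin d) → EuclideanSpace ℝ (Fin d))
    (hT : ∀ i, ∀ x y, (1 + ρ) * ‖T i x - T i y‖ ^ 2
      ≤ ‖x - y‖ ^ 2 - ‖x - T i x - y + T i y‖ ^ 2)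
    (g : Fin M → EuclideanSpace ℝ (Fin d) → EuclideanSpace ℝ (Fin d))
    (hg : ∀ i x, g i x = x - T i x)
    (xs : EuclideanSpace ℝ (Fin d)) (hxs : (M : ℝ)⁻¹ • ∑ i, T i xs = xs)
    (l : ℝ) (hl0 : 0 ≤ l) (hl1 : l ≤ 1)
    (x : Fin M → EuclideanSpace ℝ (Fin d))
    (xhat : EuclideanSpace ℝ (Fin d)) (hxhat : xhat = (M : ℝ)⁻¹ • ∑ i, x i)
    (V : ℝ) (hV : V = (M : ℝ)⁻¹ * ∑ i, ‖x i - xhat‖ ^ 2)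
    (xplus : EuclideanSpace ℝ (Fin d))
    (hxplus : xplus = (M : ℝ)⁻¹ • ∑ i, (x i - l • g i (x i))) :
    ‖xplus - xs‖ ^ 2
      ≤ (1 - l * ρ / (1 + ρ)) * ‖xhat - xs‖ ^ 2 + 5 / 2 * l * V
        - 1 / 2 * l * (1 / 2 - l)
          * ((M : ℝ)⁻¹ * ∑ i, ‖g i xhat - g i xs‖ ^ 2) := by
  have hMR : (0:ℝ) < (M:ℝ) := by exact_mod_cast hM
  have hMne : (M:ℝ) ≠ 0 := ne_of_gt hMR
  have h1ρ : (0:ℝ) < 1 + ρ := by linarith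
  -- basic vector facts
  have hTsum : ∑ i, T i xs = (M:ℝ) • xs := by
    have h := congrArg (fun z => (M:ℝ) • z) hxs
    simpa [smul_smul, mul_inv_cancel₀ hMne] using h
  have hgs : ∑ i, g i xs = (0 : EuclideanSpace ℝ (Fin d)) := by
    have : ∑ i, g i xs = ∑ i : Fin M, xs - ∑ i, T i xs := by
      rw [← Finset.sum_sub_distrib]; exact Finset.sum_congr rfl (fun i _ => by rw [hg])
    rw [this, hTsum, Finset.sum_const]
    simp [← Nat.cast_smul_eq_nsmul ℝ]
  -- local residual differences
  set q : Fin M → EuclideanSpace ℝ (Fin d) := fun i => g i (x i) - g i xs with hq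
  have hsumq : ∑ i, q i = ∑ i, g i (x i) := by
    rw [hq]; rw [Finset.sum_sub_distrib, hgs, sub_zero]
  set G : EuclideanSpace ℝ (Fin d) := (M:ℝ)⁻¹ • ∑ i, q i with hGdef
  have hxp : xplus - xs = (xhat - xs) - l • G := by
    rw [hxplus, hxhat, hGdef, hsumq, Finset.sum_sub_distrib, ← Finset.smul_sum, smul_sub,
      smul_comm]
    abel
  have hexp : ‖xplus - xs‖ ^ 2
      = ‖xhat - xs‖ ^ 2 - 2 * l * ⟪xhat - xs, G⟫ + l ^ 2 * ‖G‖ ^ 2 := by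
    rw [hxp, norm_sub_sq_real, real_inner_smul_right, norm_smul]
    simp [mul_pow, sq_abs]
    ring
  have hIP : ⟪xhat - xs, G⟫ = (M:ℝ)⁻¹ * ∑ i, ⟪xhat - xs, q i⟫ := by
    rw [hGdef, real_inner_smul_right, inner_sum]
  -- monotonicity and Lipschitz facts from the contraction property
  have hgd : ∀ i (a b : EuclideanSpace ℝ (Fin d)),
      a - T i a - b + T i b = g i a - g i b := by
    intro i a b; rw [hg, hg]; abel
  have mono : ∀ i (a b : EuclideanSpace ℝ (Fin d)),
      ρ * ‖a - b‖ ^ 2 + (2 + ρ) * ‖g i a - g i b‖ ^ 2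
        ≤ 2 * (1 + ρ) * ⟪a - b, g i a - g i b⟫ := by
    intro i a b
    have hT' := hT i a b
    rw [hgd] at hT'
    have he2 : T i a - T i b = (a - b) - (g i a - g i b) := by rw [hg, hg]; abel
    rw [he2, norm_sub_sq_real] at hT'
    nlinarith [hT']
  have lip : ∀ i (a b : EuclideanSpace ℝ (Fin d)),
      ‖g i a - g i b‖ ^ 2 ≤ ‖a - b‖ ^ 2 := by
    intro i a b
    have hT' := hT i a b
    rw [hgd] at hT'
    have hnn : 0 ≤ (1 + ρ) * ‖T i a - T i b‖ ^ 2 := by positivity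
    linarith
  -- variance identity
  have hxsum : ∑ i, x i = (M:ℝ) • xhat := by
    rw [hxhat, smul_smul, mul_inv_cancel₀ hMne, one_smul]
  have hsumdev : ∑ i, (x i - xhat) = (0 : EuclideanSpace ℝ (Fin d)) := by
    rw [Finset.sum_sub_distrib, hxsum, Finset.sum_const]
    simp [← Nat.cast_smul_eq_nsmul ℝ]
  have hvar : (M:ℝ)⁻¹ * ∑ i, ‖x i - xs‖ ^ 2 = V + ‖xhat - xs‖ ^ 2 := by
    have hpt : ∀ i : Fin M, ‖x i - xs‖ ^ 2
        = ‖x i - xhat‖ ^ 2 + 2 * ⟪x i - xhat, xhat - xs⟫ + ‖xhat - xs‖ ^ 2 := by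
      intro i
      have : x i - xs = (x i - xhat) + (xhat - xs) := by abel
      rw [this, norm_add_sq_real]
    have hcross : ∑ i, ⟪x i - xhat, xhat - xs⟫ = 0 := by
      rw [← sum_inner, hsumdev, inner_zero_left]
    calc (M:ℝ)⁻¹ * ∑ i, ‖x i - xs‖ ^ 2
        = (M:ℝ)⁻¹ * ∑ i, (‖x i - xhat‖ ^ 2 + 2 * ⟪x i - xhat, xhat - xs⟫
            + ‖xhat - xs‖ ^ 2) := by
          congr 1; exact Finset.sum_congr rfl (fun i _ => hpt i)
      _ = (M:ℝ)⁻¹ * (∑ i, ‖x i - xhat‖ ^ 2 + 2 * ∑ i, ⟪x i - xhat, xhat - xs⟫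
            + (M:ℝ) * ‖xhat - xs‖ ^ 2) := by
          rw [Finset.sum_add_distrib, Finset.sum_add_distrib, ← Finset.mul_sum,
            Finset.sum_const]
          simp [Finset.card_univ, nsmul_eq_mul]
      _ = V + ‖xhat - xs‖ ^ 2 := by
          rw [hcross, hV]; field_simp; ring
  have hSrel : ∀ i : Fin M, ‖g i xhat - g i xs‖ ^ 2
      ≤ 2 * ‖q i‖ ^ 2 + 2 * ‖x i - xhat‖ ^ 2 := by
    intro i
    have hd : g i xhat - g i xs = q i - (g i (x i) - g i xhat) := by
      simp only [hq]; abel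
    have hlip := lip i (x i) xhat
    have hsq : ‖q i - (g i (x i) - g i xhat)‖ ^ 2
        ≤ 2 * ‖q i‖ ^ 2 + 2 * ‖g i (x i) - g i xhat‖ ^ 2 := by
      rw [norm_sub_sq_real]
      have h0 : (0:ℝ) ≤ ‖q i + (g i (x i) - g i xhat)‖ ^ 2 := by positivity
      rw [norm_add_sq_real] at h0
      linarith
    rw [hd]; linarith
  have hG2 : ‖G‖ ^ 2 ≤ (M:ℝ)⁻¹ * ∑ i, ‖q i‖ ^ 2 := by
    rw [hGdef]; exact jensen_avg M hM q
  have hVnn : 0 ≤ V := by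
    rw [hV]
    exact mul_nonneg (by positivity) (Finset.sum_nonneg fun i _ => sq_nonneg _)
  have hSnn : (0:ℝ) ≤ (M:ℝ)⁻¹ * ∑ i, ‖g i xhat - g i xs‖ ^ 2 :=
    mul_nonneg (by positivity) (Finset.sum_nonneg fun i _ => sq_nonneg _)
  rcases le_or_gt l (1/2) with hc | hc
  · -- case l ≤ 1/2 : per-client monotonicity route
    have key : ∀ i : Fin M,
        ρ * ‖x i - xs‖ ^ 2 + (2 + ρ) * ‖q i‖ ^ 2
          - 2 * (1 + ρ) * (‖x i - xhat‖ ^ 2 + ‖q i‖ ^ 2 / 4)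
        ≤ 2 * (1 + ρ) * ⟪xhat - xs, q i⟫ := by
      intro i
      have hqi : q i = g i (x i) - g i xs := rfl
      have hsplit : (⟪xhat - xs, q i⟫ : ℝ) = ⟪x i - xs, q i⟫ + ⟪xhat - x i, q i⟫ := by
        have h : xhat - xs = (x i - xs) + (xhat - x i) := by abel
        rw [h, inner_add_left]
      have hm := mono i (x i) xs
      rw [← hqi] at hm
      have hy : -(‖xhat - x i‖ ^ 2 + ‖q i‖ ^ 2 / 4) ≤ (⟪xhat - x i, q i⟫ : ℝ) := by
        have h0 : (0:ℝ) ≤ ‖(xhat - x i) + (1/2 : ℝ) • q i‖ ^ 2 :=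
          sq_nonneg ‖(xhat - x i) + (1/2 : ℝ) • q i‖
        rw [norm_add_sq_real, real_inner_smul_right, norm_smul, Real.norm_eq_abs,
          abs_of_nonneg (by norm_num : (0:ℝ) ≤ 1/2)] at h0
        nlinarith [h0]
      have hy' := mul_le_mul_of_nonneg_left hy (by linarith : (0:ℝ) ≤ 2*(1+ρ))
      rw [norm_sub_rev xhat (x i)] at hy'
      rw [hsplit]
      linarith [hm, hy']
    have hsumle := Finset.sum_le_sum (fun i (_ : i ∈ Finset.univ) => key i)
    have esum : ∑ i, (ρ * ‖x i - xs‖ ^ 2 + (2 + ρ) * ‖q i‖ ^ 2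
          - 2 * (1 + ρ) * (‖x i - xhat‖ ^ 2 + ‖q i‖ ^ 2 / 4))
        = ρ * ∑ i, ‖x i - xs‖ ^ 2 + (2 + ρ) * ∑ i, ‖q i‖ ^ 2
          - 2 * (1 + ρ) * (∑ i, ‖x i - xhat‖ ^ 2 + (∑ i, ‖q i‖ ^ 2) / 4) := by
      rw [Finset.sum_sub_distrib, Finset.sum_add_distrib, ← Finset.mul_sum, ← Finset.mul_sum,
        ← Finset.mul_sum, Finset.sum_add_distrib, ← Finset.sum_div]
    have ersum : ∑ i, (2 * (1 + ρ) * ⟪xhat - xs, q i⟫ : ℝ)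
        = 2 * (1 + ρ) * ∑ i, (⟪xhat - xs, q i⟫ : ℝ) := (Finset.mul_sum _ _ _).symm
    rw [esum, ersum] at hsumle
    have hμ : (0:ℝ) ≤ (M:ℝ)⁻¹ := (inv_pos.2 hMR).le
    have hkeyavg : ρ*(V + ‖xhat - xs‖^2) + (2+ρ)*((M:ℝ)⁻¹ * ∑ i, ‖q i‖^2)
        - 2*(1+ρ)*(V + ((M:ℝ)⁻¹ * ∑ i, ‖q i‖^2)/4)
        ≤ 2*(1+ρ)*((M:ℝ)⁻¹ * ∑ i, (⟪xhat - xs, q i⟫ : ℝ)) := by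
      have h := mul_le_mul_of_nonneg_left hsumle hμ
      calc ρ*(V + ‖xhat - xs‖^2) + (2+ρ)*((M:ℝ)⁻¹ * ∑ i, ‖q i‖^2)
            - 2*(1+ρ)*(V + ((M:ℝ)⁻¹ * ∑ i, ‖q i‖^2)/4)
          = (M:ℝ)⁻¹ * (ρ * ∑ i, ‖x i - xs‖ ^ 2 + (2 + ρ) * ∑ i, ‖q i‖ ^ 2
            - 2 * (1 + ρ) * (∑ i, ‖x i - xhat‖ ^ 2 + (∑ i, ‖q i‖ ^ 2) / 4)) := by
            rw [← hvar]
            rw [hV]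
            ring
        _ ≤ (M:ℝ)⁻¹ * (2 * (1 + ρ) * ∑ i, (⟪xhat - xs, q i⟫ : ℝ)) := h
        _ = 2*(1+ρ)*((M:ℝ)⁻¹ * ∑ i, (⟪xhat - xs, q i⟫ : ℝ)) := by ring
    have hSavg : (M:ℝ)⁻¹ * ∑ i, ‖g i xhat - g i xs‖^2
        ≤ 2*((M:ℝ)⁻¹ * ∑ i, ‖q i‖^2) + 2*V := by
      have hs := Finset.sum_le_sum (fun i (_ : i ∈ Finset.univ) => hSrel i)
      have h := mul_le_mul_of_nonneg_left hs hμ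
      calc (M:ℝ)⁻¹ * ∑ i, ‖g i xhat - g i xs‖^2
          ≤ (M:ℝ)⁻¹ * ∑ i, (2*‖q i‖^2 + 2*‖x i - xhat‖^2) := h
        _ = 2*((M:ℝ)⁻¹ * ∑ i, ‖q i‖^2) + 2*((M:ℝ)⁻¹ * ∑ i, ‖x i - xhat‖^2) := by
            rw [Finset.sum_add_distrib, ← Finset.mul_sum, ← Finset.mul_sum]; ring
        _ = 2*((M:ℝ)⁻¹ * ∑ i, ‖q i‖^2) + 2*V := by rw [hV]
    have hQnn : (0:ℝ) ≤ (M:ℝ)⁻¹ * ∑ i, ‖q i‖^2 :=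
      mul_nonneg hμ (Finset.sum_nonneg fun i _ => sq_nonneg _)
    rw [hexp, hIP]
    exact scalar1 ρ l (‖xhat - xs‖^2) V ((M:ℝ)⁻¹ * ∑ i, ‖q i‖^2)
      ((M:ℝ)⁻¹ * ∑ i, ‖g i xhat - g i xs‖^2) ((M:ℝ)⁻¹ * ∑ i, (⟪xhat - xs, q i⟫ : ℝ))
      (‖G‖^2) hρ hl0 hc (sq_nonneg _) hVnn hQnn hSnn hkeyavg hG2 hSavg
  · -- case 1/2 < l : convexity + contraction route
    set v : EuclideanSpace ℝ (Fin d) := (M:ℝ)⁻¹ • ∑ i, (T i (x i) - T i xs) with hvdef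
    have hxp2 : xplus - xs = (1 - l) • (xhat - xs) + l • v := by
      have hpt : ∀ i : Fin M, x i - l • g i (x i) = (1 - l) • x i + l • T i (x i) := by
        intro i; rw [hg]; module
      have hsum2 : ∑ i, (x i - l • g i (x i))
          = (1 - l) • ∑ i, x i + l • ∑ i, T i (x i) := by
        rw [Finset.sum_congr rfl (fun i _ => hpt i), Finset.sum_add_distrib,
          ← Finset.smul_sum, ← Finset.smul_sum]
      have hA : xplus = (M:ℝ)⁻¹ • ((1 - l) • ∑ i, x i + l • ∑ i, T i (x i)) := by
        rw [hxplus, hsum2]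
      have hv'' : v = (M:ℝ)⁻¹ • ∑ i, T i (x i) - xs := by
        rw [hvdef, Finset.sum_sub_distrib, smul_sub, hxs]
      rw [hA, hxhat, hv'']
      module
    have hconv : ‖xplus - xs‖ ^ 2 ≤ (1 - l) * ‖xhat - xs‖ ^ 2 + l * ‖v‖ ^ 2 := by
      rw [hxp2]
      have hn : ‖(1 - l) • (xhat - xs) + l • v‖ ≤ (1 - l) * ‖xhat - xs‖ + l * ‖v‖ := by
        refine le_trans (norm_add_le _ _) ?_
        rw [norm_smul, norm_smul]
        simp [Real.norm_eq_abs, abs_of_nonneg (by linarith : (0:ℝ) ≤ 1 - l),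
          abs_of_nonneg hl0]
      have h2 := pow_le_pow_left₀ (norm_nonneg _) hn 2
      nlinarith [h2, mul_nonneg (mul_nonneg hl0 (by linarith : (0:ℝ) ≤ 1 - l))
        (sq_nonneg (‖xhat - xs‖ - ‖v‖))]
    have hvbound : (1 + ρ) * ‖v‖ ^ 2 ≤ V + ‖xhat - xs‖ ^ 2 := by
      have hj : ‖v‖ ^ 2 ≤ (M:ℝ)⁻¹ * ∑ i, ‖T i (x i) - T i xs‖ ^ 2 := by
        rw [hvdef]; exact jensen_avg M hM _
      have hci : ∀ i : Fin M, (1 + ρ) * ‖T i (x i) - T i xs‖ ^ 2 ≤ ‖x i - xs‖ ^ 2 := by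
        intro i
        have hT' := hT i (x i) xs
        rw [hgd] at hT'
        nlinarith [sq_nonneg ‖g i (x i) - g i xs‖]
      have hsum := Finset.sum_le_sum (fun i (_ : i ∈ Finset.univ) => hci i)
      rw [← Finset.mul_sum] at hsum
      calc (1 + ρ) * ‖v‖ ^ 2
          ≤ (1 + ρ) * ((M:ℝ)⁻¹ * ∑ i, ‖T i (x i) - T i xs‖ ^ 2) :=
            mul_le_mul_of_nonneg_left hj h1ρ.le
        _ = (M:ℝ)⁻¹ * ((1 + ρ) * ∑ i, ‖T i (x i) - T i xs‖ ^ 2) := by ring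
        _ ≤ (M:ℝ)⁻¹ * ∑ i, ‖x i - xs‖ ^ 2 :=
            mul_le_mul_of_nonneg_left hsum (inv_pos.2 hMR).le
        _ = V + ‖xhat - xs‖ ^ 2 := hvar
    have hvb2 : l * ‖v‖ ^ 2 ≤ l / (1 + ρ) * (V + ‖xhat - xs‖ ^ 2) := by
      rw [div_mul_eq_mul_div, le_div_iff₀ h1ρ]
      nlinarith [mul_le_mul_of_nonneg_left hvbound hl0]
    have hld : l - l * ρ / (1 + ρ) = l / (1 + ρ) := by field_simp; ring
    have hls : l / (1 + ρ) ≤ l := div_le_self hl0 (by linarith)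
    have hSpos : 0 ≤ 1 / 2 * l * (l - 1 / 2)
        * ((M:ℝ)⁻¹ * ∑ i, ‖g i xhat - g i xs‖ ^ 2) := by
      apply mul_nonneg _ hSnn
      have h1 : (0:ℝ) ≤ l - 1/2 := by linarith
      have h2 : (0:ℝ) ≤ 1/2*l := by linarith
      exact mul_nonneg h2 h1
    nlinarith [hconv, hvb2, hSpos, mul_le_mul_of_nonneg_right hls hVnn,
      mul_le_mul_of_nonneg_right hls (sq_nonneg ‖xhat - xs‖), hld]
end

section
/- Let ρ > 0 and let T_1, ..., T_M be operators on ℝ^d each satisfying (1+ρ)‖T_i(x) − T_i(y)‖² ≤ ‖x − y‖² − ‖x − T_i(x) − y + T_i(y)‖² for all x, y ∈ ℝ^d. Let g_i(x) = x − T_i(x), let x⋆ be a fixed point of 𝒯 = (1/M) Σ_{i=1}^M T_i, let σ² = (1/M) Σ_{i=1}^M ‖x⋆ − T_i(x⋆)‖², let 0 < p ≤ 1, and let 0 < λ < p/15. Let x_1, ..., x_M ∈ ℝ^d, x̂ = (1/M) Σ_i x_i, V = (1/M) Σ_i ‖x_i − x̂‖², ĝ = (1/M) Σ_i g_i(x_i),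 and define W = (1 − p)·(1/M) Σ_{i=1}^M ‖x̂ − λĝ − x_i + λ g_i(x_i)‖² (the expected deviation from the average after one step, since the deviation is zero with probability p and equals this quantity with probability 1−p). Then V ≤ (2/p)(1 − p/4 + (5/p)λ²)V + (20λ²/p²)(1/M) Σ_{i=1}^M ‖g_i(x̂) − g_i(x⋆)‖² + 60λ²σ²/p² − (2/p)W. -/
open scoped RealInnerProductSpace
open Finset

lemma aux_nonexp {E : Type*} [NormedAddCommGroup E] [InnerProductSpace ℝ E]
    {ρ : ℝ} (hρ : 0 < ρ) (T : E → E)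
    (hT : ∀ x y, (1 + ρ) * ‖T x - T y‖ ^ 2 ≤ ‖x - y‖ ^ 2 - ‖x - T x - y + T y‖ ^ 2)
    (x y : E) : ‖(x - T x) - (y - T y)‖ ^ 2 ≤ ‖x - y‖ ^ 2 := by
  have h := hT x y
  have e : x - T x - y + T y = (x - T x) - (y - T y) := by abel
  rw [e] at h
  nlinarith [sq_nonneg ‖T x - T y‖]

lemma aux_mono {E : Type*} [NormedAddCommGroup E] [InnerProductSpace ℝ E]
    {ρ : ℝ} (hρ : 0 < ρ) (T : E → E)
    (hT : ∀ x y, (1 + ρ) * ‖T x - T y‖ ^ 2 ≤ ‖x - y‖ ^ 2 - ‖x - T x - y + T y‖ ^ 2)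
    (x y : E) : 0 ≤ ⟪x - y, (x - T x) - (y - T y)⟫ := by
  have h := hT x y
  have e : x - T x - y + T y = (x - T x) - (y - T y) := by abel
  rw [e] at h
  have e2 : T x - T y = (x - y) - ((x - T x) - (y - T y)) := by abel
  rw [e2, norm_sub_sq_real] at h
  nlinarith [sq_nonneg ‖x - y‖, sq_nonneg ‖(x - T x) - (y - T y)‖]


lemma aux_sq2 (a b c : ℝ) (ha : 0 ≤ a) (h : a ≤ b + c) :
    a ^ 2 ≤ 2 * b ^ 2 + 2 * c ^ 2 := by
  nlinarith [sq_nonneg (b - c), sq_nonneg (b + c)]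

lemma aux_young (p l a b t : ℝ) (hp : 0 < p) (hl : 0 < l) (ht : |t| ≤ a * b) :
    -(2 * l * p * t) ≤ p ^ 2 / 4 * a ^ 2 + 4 * l ^ 2 * b ^ 2 := by
  have h1 : 0 ≤ 2 * l * p * (a * b + t) := by
    apply mul_nonneg (by positivity)
    have h := neg_abs_le t
    linarith
  nlinarith [sq_nonneg (p * a / 2 - 2 * l * b)]

lemma aux_final (p l V A σ2 W : ℝ) (hp0 : 0 < p) (hp1 : p ≤ 1) (hl0 : 0 < l)
    (hV0 : 0 ≤ V) (hA0 : 0 ≤ A) (hC0 : 0 ≤ σ2)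
    (hPW : p * W ≤ (1 - p) * ((p + p ^ 2 / 4 + 2 * p * l ^ 2) * V
      + (4 * l ^ 2 + 2 * p * l ^ 2) * (2 * A + 2 * σ2))) :
    V ≤ 2 / p * (1 - p / 4 + 5 / p * l ^ 2) * V
        + 20 * l ^ 2 / p ^ 2 * A + 60 * l ^ 2 * σ2 / p ^ 2 - 2 / p * W := by
  have key : 0 ≤ 2 / p * (1 - p / 4 + 5 / p * l ^ 2) * V
      + 20 * l ^ 2 / p ^ 2 * A + 60 * l ^ 2 * σ2 / p ^ 2 - 2 / p * W - V := by
    have e : 2 / p * (1 - p / 4 + 5 / p * l ^ 2) * V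
        + 20 * l ^ 2 / p ^ 2 * A + 60 * l ^ 2 * σ2 / p ^ 2 - 2 / p * W - V
        = (2 * p * V - p ^ 2 / 2 * V + 10 * l ^ 2 * V + 20 * l ^ 2 * A
            + 60 * l ^ 2 * σ2 - 2 * (p * W) - p ^ 2 * V) / p ^ 2 := by
      field_simp
      ring
    rw [e]
    apply div_nonneg _ (sq_nonneg p)
    have hv' : 0 ≤ (10 * l ^ 2 - 4 * p * l ^ 2 + p ^ 3 / 2 + 4 * p ^ 2 * l ^ 2) * V := by
      apply mul_nonneg _ hV0
      nlinarith [mul_nonneg (sub_nonneg.2 hp1) (sq_nonneg l), pow_pos hp0 3,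
        mul_nonneg (mul_nonneg hp0.le hp0.le) (sq_nonneg l)]
    have ha' : 0 ≤ (4 * l ^ 2 + 8 * p * l ^ 2 + 8 * p ^ 2 * l ^ 2) * A :=
      mul_nonneg (by positivity) hA0
    have hc' : 0 ≤ (44 * l ^ 2 + 8 * p * l ^ 2 + 8 * p ^ 2 * l ^ 2) * σ2 :=
      mul_nonneg (by positivity) hC0
    nlinarith [hPW, hv', ha', hc']
  linarith

set_option maxHeartbeats 1000000 in
/-- Lemma 4, bound on the deviation from average for one step
of Algorithm 2. -/
theorem stmt_18 (d M : ℕ) (hM : 0 < M) (ρ : ℝ) (hρ : 0 < ρ)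
    (T : Fin M → EuclideanSpace ℝ (Fin d) → EuclideanSpace ℝ (Fin d))
    (hT : ∀ i, ∀ x y, (1 + ρ) * ‖T i x - T i y‖ ^ 2
      ≤ ‖x - y‖ ^ 2 - ‖x - T i x - y + T i y‖ ^ 2)
    (g : Fin M → EuclideanSpace ℝ (Fin d) → EuclideanSpace ℝ (Fin d))
    (hg : ∀ i x, g i x = x - T i x)
    (xs : EuclideanSpace ℝ (Fin d)) (hxs : (M : ℝ)⁻¹ • ∑ i, T i xs = xs)
    (σ2 : ℝ) (hσ2 : σ2 = (M : ℝ)⁻¹ * ∑ i, ‖xs - T i xs‖ ^ 2)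
    (p : ℝ) (hp0 : 0 < p) (hp1 : p ≤ 1)
    (l : ℝ) (hl0 : 0 < l) (hl1 : l < p / 15)
    (x : Fin M → EuclideanSpace ℝ (Fin d))
    (xhat : EuclideanSpace ℝ (Fin d)) (hxhat : xhat = (M : ℝ)⁻¹ • ∑ i, x i)
    (V : ℝ) (hV : V = (M : ℝ)⁻¹ * ∑ i, ‖x i - xhat‖ ^ 2)
    (ghat : EuclideanSpace ℝ (Fin d)) (hghat : ghat = (M : ℝ)⁻¹ • ∑ i, g i (x i))
    (W : ℝ) (hW : W = (1 - p)
      * ((M : ℝ)⁻¹ * ∑ i, ‖xhat - l • ghat - x i + l • g i (x i)‖ ^ 2)) :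
    V ≤ 2 / p * (1 - p / 4 + 5 / p * l ^ 2) * V
        + 20 * l ^ 2 / p ^ 2 * ((M : ℝ)⁻¹ * ∑ i, ‖g i xhat - g i xs‖ ^ 2)
        + 60 * l ^ 2 * σ2 / p ^ 2
        - 2 / p * W := by
  have hM' : (0:ℝ) < (M:ℝ) := by exact_mod_cast hM
  have hMne : (M:ℝ) ≠ 0 := ne_of_gt hM'
  have hMinv : (0:ℝ) < (M:ℝ)⁻¹ := by positivity
  have hsmul : ∀ (v : EuclideanSpace ℝ (Fin d)), (M:ℝ) • ((M:ℝ)⁻¹ • v) = v := by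
    intro v; rw [smul_smul, mul_inv_cancel₀ hMne, one_smul]
  have hconst : ∀ (v : EuclideanSpace ℝ (Fin d)), ∑ _i : Fin M, v = (M:ℝ) • v := by
    intro v
    rw [Finset.sum_const, Finset.card_univ, Fintype.card_fin, Nat.cast_smul_eq_nsmul ℝ]
  have hsx : ∑ i, x i = (M:ℝ) • xhat := by rw [hxhat, hsmul]
  have hsg : ∑ i, g i (x i) = (M:ℝ) • ghat := by rw [hghat, hsmul]
  have hδ0 : ∑ i, (x i - xhat) = 0 := by
    rw [Finset.sum_sub_distrib, hsx, hconst, sub_self]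
  have hne : ∀ i (a b : EuclideanSpace ℝ (Fin d)), ‖g i a - g i b‖ ^ 2 ≤ ‖a - b‖ ^ 2 := by
    intro i a b
    rw [hg i a, hg i b]
    exact aux_nonexp hρ (T i) (hT i) a b
  have hmono : ∀ i (a b : EuclideanSpace ℝ (Fin d)), 0 ≤ ⟪a - b, g i a - g i b⟫ := by
    intro i a b
    rw [hg i a, hg i b]
    exact aux_mono hρ (T i) (hT i) a b
  set SV : ℝ := ∑ i, ‖x i - xhat‖ ^ 2 with hSV
  set SA : ℝ := ∑ i, ‖g i xhat - g i xs‖ ^ 2 with hSA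
  set SC : ℝ := ∑ i, ‖xs - T i xs‖ ^ 2 with hSC
  set SG : ℝ := ∑ i, ‖g i xhat‖ ^ 2 with hSG
  set SY : ℝ := ∑ i, ‖g i (x i)‖ ^ 2 with hSY
  set J : ℝ := ∑ i, ⟪x i - xhat, g i xhat⟫ with hJ
  set I : ℝ := ∑ i, ⟪x i - xhat, g i (x i) - ghat⟫ with hI
  set Sγ : ℝ := ∑ i, ‖g i (x i) - ghat‖ ^ 2 with hSγ
  set SW : ℝ := ∑ i, ‖xhat - l • ghat - x i + l • g i (x i)‖ ^ 2 with hSW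
  clear_value SV SA SC SG SY J I Sγ SW
  have hSV0 : 0 ≤ SV := by rw [hSV]; exact Finset.sum_nonneg fun i _ => sq_nonneg _
  have hSA0 : 0 ≤ SA := by rw [hSA]; exact Finset.sum_nonneg fun i _ => sq_nonneg _
  have hSC0 : 0 ≤ SC := by rw [hSC]; exact Finset.sum_nonneg fun i _ => sq_nonneg _
  have hSG0 : 0 ≤ SG := by rw [hSG]; exact Finset.sum_nonneg fun i _ => sq_nonneg _
  -- f1 : expansion of the W sum
  have f1 : SW = SV - 2 * l * I + l ^ 2 * Sγ := by
    rw [hSW, hSV, hI, hSγ]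
    have hpt : ∀ i ∈ (univ : Finset (Fin M)), ‖xhat - l • ghat - x i + l • g i (x i)‖ ^ 2
        = ‖x i - xhat‖ ^ 2 - 2 * l * ⟪x i - xhat, g i (x i) - ghat⟫
          + l ^ 2 * ‖g i (x i) - ghat‖ ^ 2 := by
      intro i _
      have e : xhat - l • ghat - x i + l • g i (x i)
          = -((x i - xhat) - l • (g i (x i) - ghat)) := by
        rw [smul_sub]; abel
      rw [e, norm_neg, norm_sub_sq_real, real_inner_smul_right, norm_smul,
        Real.norm_eq_abs, mul_pow, sq_abs]
      ring
    rw [Finset.sum_congr rfl hpt, Finset.sum_add_distrib, Finset.sum_sub_distrib,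
      ← Finset.mul_sum, ← Finset.mul_sum]
  -- f2 : J ≤ I
  have f2 : J ≤ I := by
    have hIeq : I = ∑ i, ⟪x i - xhat, g i (x i)⟫ := by
      rw [hI]
      have h0 : ∀ i ∈ (univ : Finset (Fin M)), ⟪x i - xhat, g i (x i) - ghat⟫
          = ⟪x i - xhat, g i (x i)⟫ - ⟪x i - xhat, ghat⟫ := fun i _ =>
        inner_sub_right _ _ _
      rw [Finset.sum_congr rfl h0, Finset.sum_sub_distrib, ← sum_inner, hδ0,
        inner_zero_left, sub_zero]
    rw [hIeq, hJ]
    apply Finset.sum_le_sum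
    intro i _
    have h := hmono i (x i) xhat
    have e : ⟪x i - xhat, g i (x i)⟫
        = ⟪x i - xhat, g i (x i) - g i xhat⟫ + ⟪x i - xhat, g i xhat⟫ := by
      rw [inner_sub_right]; ring
    linarith [e.le, e.ge]
  -- f3 : Sγ ≤ SY
  have f3 : Sγ ≤ SY := by
    have hpt : ∀ i ∈ (univ : Finset (Fin M)), ‖g i (x i) - ghat‖ ^ 2
        = ‖g i (x i)‖ ^ 2 - (2 * ⟪g i (x i), ghat⟫ - ‖ghat‖ ^ 2) := by
      intro i _; rw [norm_sub_sq_real]; ring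
    have h2 : ∑ i, (2 * ⟪g i (x i), ghat⟫ - ‖ghat‖ ^ 2) = (M:ℝ) * ‖ghat‖ ^ 2 := by
      rw [Finset.sum_sub_distrib, ← Finset.mul_sum, ← sum_inner, hsg,
        real_inner_smul_left, real_inner_self_eq_norm_sq]
      have h3 : ∑ _i : Fin M, ‖ghat‖ ^ 2 = (M:ℝ) * ‖ghat‖ ^ 2 := by
        rw [Finset.sum_const, Finset.card_univ, Fintype.card_fin, nsmul_eq_mul]
      rw [h3]; ring
    rw [hSγ, Finset.sum_congr rfl hpt, Finset.sum_sub_distrib, h2, hSY]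
    nlinarith [mul_nonneg hM'.le (sq_nonneg ‖ghat‖)]
  -- f4 : SY ≤ 2 SV + 2 SG
  have f4 : SY ≤ 2 * SV + 2 * SG := by
    rw [hSY, hSV, hSG, Finset.mul_sum, Finset.mul_sum, ← Finset.sum_add_distrib]
    apply Finset.sum_le_sum
    intro i _
    have h1 := hne i (x i) xhat
    have h2 : ‖g i (x i)‖ ≤ ‖g i (x i) - g i xhat‖ + ‖g i xhat‖ := by
      have h := norm_add_le (g i (x i) - g i xhat) (g i xhat)
      simpa using h
    have h3 := aux_sq2 _ _ _ (norm_nonneg (g i (x i))) h2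
    linarith
  -- f5 : SG ≤ 2 SA + 2 SC
  have f5 : SG ≤ 2 * SA + 2 * SC := by
    rw [hSG, hSA, hSC, Finset.mul_sum, Finset.mul_sum, ← Finset.sum_add_distrib]
    apply Finset.sum_le_sum
    intro i _
    have h2 : ‖g i xhat‖ ≤ ‖g i xhat - g i xs‖ + ‖xs - T i xs‖ := by
      calc ‖g i xhat‖ = ‖g i xhat - g i xs + g i xs‖ := by rw [sub_add_cancel]
        _ ≤ ‖g i xhat - g i xs‖ + ‖g i xs‖ := norm_add_le _ _
        _ = ‖g i xhat - g i xs‖ + ‖xs - T i xs‖ := by rw [hg i xs]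
    exact aux_sq2 _ _ _ (norm_nonneg (g i xhat)) h2
  -- f6 : -(2 l p J) ≤ p²/4 SV + 4 l² SG
  have f6 : -(2 * l * p * J) ≤ p ^ 2 / 4 * SV + 4 * l ^ 2 * SG := by
    rw [hJ, hSV, hSG, Finset.mul_sum, Finset.mul_sum, Finset.mul_sum,
      ← Finset.sum_add_distrib, ← Finset.sum_neg_distrib]
    apply Finset.sum_le_sum
    intro i _
    exact aux_young p l _ _ _ hp0 hl0 (abs_real_inner_le_norm (x i - xhat) (g i xhat))
  -- master bound on p * SW
  have master : p * SW
      ≤ (p + p ^ 2 / 4 + 2 * p * l ^ 2) * SV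
        + (4 * l ^ 2 + 2 * p * l ^ 2) * (2 * SA + 2 * SC) := by
    rw [f1]
    have h1 : 0 ≤ 2 * l * p * (I - J) :=
      mul_nonneg (by positivity) (by linarith)
    have h2 : 0 ≤ p * l ^ 2 * (SY - Sγ) :=
      mul_nonneg (by positivity) (by linarith)
    have h3 : 0 ≤ p * l ^ 2 * (2 * SV + 2 * SG - SY) :=
      mul_nonneg (by positivity) (by linarith)
    have h4 : 0 ≤ (4 * l ^ 2 + 2 * p * l ^ 2) * (2 * SA + 2 * SC - SG) :=
      mul_nonneg (by positivity) (by linarith)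
    linarith [f6, h1, h2, h3, h4]
  -- translate to averaged quantities
  have hPW : p * W ≤ (1 - p) * ((p + p ^ 2 / 4 + 2 * p * l ^ 2) * V
      + (4 * l ^ 2 + 2 * p * l ^ 2) * (2 * ((M:ℝ)⁻¹ * SA) + 2 * σ2)) := by
    rw [hW, hV, hσ2]
    have h1 : (M:ℝ)⁻¹ * (p * SW)
        ≤ (M:ℝ)⁻¹ * ((p + p ^ 2 / 4 + 2 * p * l ^ 2) * SV
            + (4 * l ^ 2 + 2 * p * l ^ 2) * (2 * SA + 2 * SC)) :=
      mul_le_mul_of_nonneg_left master hMinv.le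
    have h2 : 0 ≤ 1 - p := by linarith
    have h3 := mul_le_mul_of_nonneg_left h1 h2
    calc p * ((1 - p) * ((M:ℝ)⁻¹ * SW))
        = (1 - p) * ((M:ℝ)⁻¹ * (p * SW)) := by ring
      _ ≤ (1 - p) * ((M:ℝ)⁻¹ * ((p + p ^ 2 / 4 + 2 * p * l ^ 2) * SV
            + (4 * l ^ 2 + 2 * p * l ^ 2) * (2 * SA + 2 * SC))) := h3
      _ = (1 - p) * ((p + p ^ 2 / 4 + 2 * p * l ^ 2) * ((M:ℝ)⁻¹ * SV)
            + (4 * l ^ 2 + 2 * p * l ^ 2)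
              * (2 * ((M:ℝ)⁻¹ * SA) + 2 * ((M:ℝ)⁻¹ * SC))) := by ring
  have hV0 : 0 ≤ V := by rw [hV]; positivity
  have hA0 : 0 ≤ (M:ℝ)⁻¹ * SA := mul_nonneg hMinv.le hSA0
  have hC0 : 0 ≤ σ2 := by rw [hσ2]; positivity
  exact aux_final p l V ((M:ℝ)⁻¹ * SA) σ2 W hp0 hp1 hl0 hV0 hA0 hC0 hPW
end
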